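/- Dyck-2 recognition via the base-3 stack: define a partial run over strings in the alphabet {open₁, open₂, close₁, close₂} starting from stack value 0, where openᵢ performs push(i, s) = 3s + i, and closeᵢ is permitted only if s mod 3 = i, in which case the new stack is ⌊s/3⌋. A string is a well-matched Dyck-2 word if and only if the run is defined at every step and ends with stack value 0. -/

import Mathlib

/-- The four symbols of the Dyck-2 alphabet. -/
inductive DSym where
  | open1 | open2 | close1 | close2
deriving DecidableEq

/-- Dyck-2 words: empty, wrapping in either bracket type, and concatenation. -/
inductive Dyck2 : List DSym → Prop where
  | nil : Dyck2 []
  | wrap1 {w : List DSym} : Dyck2 w → Dyck2 (DSym.open1 :: w ++ [DSym.close1])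
  | wrap2 {w : List DSym} : Dyck2 w → Dyck2 (DSym.open2 :: w ++ [DSym.close2])
  | append {w₁ w₂ : List DSym} : Dyck2 w₁ → Dyck2 w₂ → Dyck2 (w₁ ++ w₂)

/-- One step of the base-3 stack automaton: `openᵢ` pushes digit `i`;
`closeᵢ` is permitted only if the top digit is `i`, and pops it. -/
def step2 (s : ℕ) : DSym → Option ℕ
  | DSym.open1 => some (3 * s + 1)
  | DSym.open2 => some (3 * s + 2)
  | DSym.close1 => if s % 3 = 1 then some (s / 3) else none
  | DSym.close2 => if s % 3 = 2 then some (s / 3) else none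

/-- The (partial) run of the automaton on a word, from stack value `s`. -/
def run2 (s : ℕ) : List DSym → Option ℕ
  | [] => some s
  | a :: w => (step2 s a).bind fun s' => run2 s' w

/-!
Think of `3 * s + digit b` as the stack `s` with a bracket of kind `b` pushed. A Dyck word leaves
every stack unchanged, which gives one direction. Conversely, if a run starting from `s` with `b`
pushed reaches the empty stack, the digit `b` is eventually popped, and only by a `closing b`
preceded by a Dyck word. Applied to the first letter of an accepted word, this splits it as
`opening b :: u ++ closing b :: v` with `u` Dyck and `v` accepted.
-/

namespace DSym

def opening : Bool → DSym
  | true => open1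
  | false => open2

def closing : Bool → DSym
  | true => close1
  | false => close2

theorem exists_eq_opening_or_eq_closing (a : DSym) : ∃ b, a = opening b ∨ a = closing b := by
  cases a
  exacts [⟨true, .inl rfl⟩, ⟨false, .inl rfl⟩, ⟨true, .inr rfl⟩, ⟨false, .inr rfl⟩]

def digit : Bool → ℕ
  | true => 1
  | false => 2

end DSym

open DSym

theorem Dyck2.wrap {w : List DSym} (b : Bool) (h : Dyck2 w) :
    Dyck2 (opening b :: w ++ [closing b]) := by
  cases b
  exacts [h.wrap2, h.wrap1]

theorem step2_opening (s : ℕ) (b : Bool) : step2 s (opening b) = some (3 * s + digit b) := by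
  cases b <;> rfl

theorem step2_push_closing (s : ℕ) (b b' : Bool) :
    step2 (3 * s + digit b) (closing b') = if b' = b then some s else none := by
  cases b <;> cases b' <;> simp [step2, closing, digit] <;> omega

theorem step2_zero_closing (b : Bool) : step2 0 (closing b) = none := by
  cases b <;> rfl

theorem run2_append (s : ℕ) (u v : List DSym) :
    run2 s (u ++ v) = (run2 s u).bind (run2 · v) := by
  induction u generalizing s with
  | nil => rfl
  | cons a u ih => simp only [List.cons_append, run2, ih, Option.bind_assoc]

theorem run2_opening_cons (s : ℕ) (b : Bool) (w : List DSym) :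
    run2 s (opening b :: w) = run2 (3 * s + digit b) w := by
  simp only [run2, step2_opening, Option.bind_some]

theorem run2_wrap {w : List DSym} (b : Bool) (hw : ∀ s, run2 s w = some s) (s : ℕ) :
    run2 s (opening b :: w ++ [closing b]) = some s := by
  simp [run2_opening_cons, run2_append, hw, run2, step2_push_closing]

theorem Dyck2.run2_eq {w : List DSym} (h : Dyck2 w) (s : ℕ) : run2 s w = some s := by
  induction h generalizing s with
  | nil => rfl
  | wrap1 _ ih => exact run2_wrap true ih s
  | wrap2 _ ih => exact run2_wrap false ih s
  | append _ _ ih₁ ih₂ => simp only [run2_append, ih₁, ih₂, Option.bind_some]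

theorem exists_split_of_run2_push {s : ℕ} {b : Bool} {w : List DSym}
    (h : run2 (3 * s + digit b) w = some 0) :
    ∃ u v, w = u ++ closing b :: v ∧ Dyck2 u ∧ run2 s v = some 0 := by
  match w with
  | [] => cases b <;> simp [run2, digit] at h
  | a :: w =>
    obtain ⟨b', rfl | rfl⟩ := a.exists_eq_opening_or_eq_closing
    · rw [run2_opening_cons] at h
      obtain ⟨u₁, v₁, rfl, hu₁, hv₁⟩ := exists_split_of_run2_push h
      obtain ⟨u₂, v, rfl, hu₂, hv⟩ := exists_split_of_run2_push hv₁
      exact ⟨opening b' :: u₁ ++ [closing b'] ++ u₂, v, by simp,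
        (hu₁.wrap b').append hu₂, hv⟩
    · rw [run2, step2_push_closing] at h
      split_ifs at h with hb
      · exact ⟨[], w, by rw [hb]; rfl, .nil, h⟩
      · simp at h
termination_by w.length

theorem dyck2_of_run2_zero {w : List DSym} (h : run2 0 w = some 0) : Dyck2 w := by
  match w with
  | [] => exact .nil
  | a :: w =>
    obtain ⟨b, rfl | rfl⟩ := a.exists_eq_opening_or_eq_closing
    · rw [run2_opening_cons] at h
      obtain ⟨u, v, rfl, hu, hv⟩ := exists_split_of_run2_push h
      simpa using (hu.wrap b).append (dyck2_of_run2_zero hv)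
    · simp [run2, step2_zero_closing] at h
termination_by w.length

/-- A word is Dyck-2 iff the stack automaton's run is defined at every step,
starts at 0 and ends at 0. -/
theorem dyck2_iff_run (w : List DSym) : Dyck2 w ↔ run2 0 w = some 0 :=
  ⟨fun h => h.run2_eq 0, dyck2_of_run2_zero⟩
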